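/- Let G be a finite group and let 𝒳 be a partition of Irr(G). If (𝒳, 𝒦) and (𝒳, 𝒦') are both supercharacter theories of G, then 𝒦 = 𝒦'. In other words, a partition of Irr(G) admits at most one partition of Con(G) making the pair a supercharacter theory. -/

import Mathlib

open scoped BigOperators

/-- `σ_X(g) = ∑_{χ ∈ X} χ(1)·χ(g)`. -/
noncomputable def sigmaCF {G : Type} [Group G] (X : Set (G → ℂ)) (g : G) : ℂ :=
  ∑ᶠ χ ∈ X, χ 1 * χ g

/-- `f` is the character of some irreducible (simple) complex representation of `G`. -/
def IsIrrChar (G : Type) [Group G] (f : G → ℂ) : Prop :=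
  ∃ V : FDRep ℂ G, CategoryTheory.Simple V ∧ FDRep.character V = f

/-- The set of irreducible complex characters of `G`. -/
def Irr (G : Type) [Group G] : Set (G → ℂ) := {f | IsIrrChar G f}

/-- The trivial character of `G`. -/
def trivChar (G : Type) [Group G] : G → ℂ := fun _ => 1

/-- `X ⊆ Irr(G)` and `S ⊆ Con(G)` are consistent if `σ_X` takes the same value on all
conjugacy classes belonging to `S`. -/
def Consistent {G : Type} [Group G] (X : Set (G → ℂ)) (S : Set (ConjClasses G)) : Prop :=
  ∀ x y : G, ConjClasses.mk x ∈ S → ConjClasses.mk y ∈ S → sigmaCF X x = sigmaCF X y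

/-- `X` is a bad part: every nonempty subset of `Con(G)` consistent with `X` is a singleton. -/
def IsBadPart {G : Type} [Group G] (X : Set (G → ℂ)) : Prop :=
  ∀ S : Set (ConjClasses G), S.Nonempty → Consistent X S → ∃ K, S = {K}

/-- A supercharacter theory of `G`: `𝒳` is a partition of `Irr(G)`, `𝒦` is a partition of
`Con(G)` containing `{e}` as a part, `|𝒳| = |𝒦|`, and every part of `𝒳` is consistent with
every part of `𝒦`. -/
structure IsSCT (G : Type) [Group G] (𝒳 : Set (Set (G → ℂ)))
    (𝒦 : Set (Set (ConjClasses G))) : Prop where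
  nonemptyX : ∀ X ∈ 𝒳, X.Nonempty
  pairwiseX : 𝒳.Pairwise Disjoint
  unionX : ⋃₀ 𝒳 = Irr G
  nonemptyK : ∀ S ∈ 𝒦, S.Nonempty
  pairwiseK : 𝒦.Pairwise Disjoint
  unionK : ⋃₀ 𝒦 = Set.univ
  idClassMem : {ConjClasses.mk (1 : G)} ∈ 𝒦
  cardEq : 𝒳.ncard = 𝒦.ncard
  consistentPairs : ∀ X ∈ 𝒳, ∀ S ∈ 𝒦, Consistent X S

/-- A set partition of a type `α`. -/
def IsSetPartition {α : Type} (P : Set (Set α)) : Prop :=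
  (∀ A ∈ P, A.Nonempty) ∧ P.Pairwise Disjoint ∧ ⋃₀ P = Set.univ

/-- The `n`-th Bell number: the number of set partitions of an `n`-element set. -/
noncomputable def bell (n : ℕ) : ℕ :=
  Nat.card {P : Set (Set (Fin n)) // IsSetPartition P}

/-! By orthogonality of irreducible characters the functions `σ_X`, `X ∈ 𝒳`, are linearly
independent. In a supercharacter theory `(𝒳, 𝒦)` they are constant on the parts of `𝒦` and there
are `|𝒦|` of them, so they form a basis of the functions constant on the parts of `𝒦`. Hence two
classes lie in the same part of `𝒦` iff every `σ_X` takes the same value on them: `𝒦` is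
determined by `𝒳`. -/

theorem LinearIndependent.of_pairwise_dual_eq_zero_of_ne_zero {ι K M : Type*} [Field K]
    [AddCommGroup M] [Module K M] (v : ι → M) (f : ι → Module.Dual K M)
    (h_ne : Pairwise fun i j ↦ f i (v j) = 0) (h_eq : ∀ i, f i (v i) ≠ 0) :
    LinearIndependent K v :=
  .of_pairwise_dual_eq_zero_one v (fun i ↦ (f i (v i))⁻¹ • f i)
    (fun i j hij ↦ by simp [h_ne hij]) (fun i ↦ by simp [h_eq i])

theorem LinearIndependent.eq_of_forall_apply_eq {ι κ K : Type*} [Field K] [Fintype ι]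
    [Fintype κ] {w : ι → κ → K} (hw : LinearIndependent K w)
    (hcard : Fintype.card ι = Fintype.card κ) {a b : κ} (hab : ∀ i, w i a = w i b) : a = b := by
  classical
  let ℓ : (κ → K) →ₗ[K] K := LinearMap.proj (R := K) (φ := fun _ ↦ K) a - LinearMap.proj b
  have hspan : Submodule.span K (Set.range w) ≤ LinearMap.ker ℓ :=
    Submodule.span_le.mpr <| Set.range_subset_iff.mpr fun i ↦ by simp [ℓ, hab i]
  rw [hw.span_eq_top_of_card_eq_finrank' (by simpa using hcard)] at hspan
  by_contra hne
  simpa [ℓ, Pi.single_apply, Ne.symm hne] using hspan (Submodule.mem_top (x := Pi.single a 1))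

section Characters

variable {G : Type} [Group G] [Fintype G]

open scoped Classical in
theorem sum_character_mul_character_inv (V W : FDRep ℂ G) [CategoryTheory.Simple V]
    [CategoryTheory.Simple W] :
    ∑ g, V.character g * W.character g⁻¹ =
      if Nonempty (V ≅ W) then (Fintype.card G : ℂ) else 0 := by
  have hG : (Nat.card G : ℂ) ≠ 0 := Nat.cast_ne_zero.mpr Nat.card_pos.ne'
  let : Invertible (Nat.card G : ℂ) := invertibleOfNonzero hG
  have h := FDRep.char_orthonormal V W
  split_ifs at h ⊢ <;> field_simp at h <;> simpa using h

noncomputable def charPairing (ψ : G → ℂ) : Module.Dual ℂ (G → ℂ) where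
  toFun f := ∑ g, f g * ψ g⁻¹
  map_add' f f' := by simp [add_mul, Finset.sum_add_distrib]
  map_smul' c f := by simp [Finset.mul_sum, mul_assoc]

open scoped Classical in
theorem charPairing_of_isIrrChar {χ ψ : G → ℂ} (hχ : IsIrrChar G χ) (hψ : IsIrrChar G ψ) :
    charPairing ψ χ = if χ = ψ then (Fintype.card G : ℂ) else 0 := by
  obtain ⟨V, hV, rfl⟩ := hχ
  obtain ⟨W, hW, rfl⟩ := hψ
  change ∑ g, _ = _
  split_ifs with hVW
  · rw [← hVW, sum_character_mul_character_inv, if_pos ⟨CategoryTheory.Iso.refl V⟩]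
  · rw [sum_character_mul_character_inv, if_neg fun ⟨e⟩ ↦ hVW (FDRep.char_iso e)]

theorem IsIrrChar.apply_one_ne_zero {χ : G → ℂ} (hχ : IsIrrChar G χ) : χ 1 ≠ 0 := by
  have hnorm := charPairing_of_isIrrChar hχ hχ
  obtain ⟨V, hV, rfl⟩ := hχ
  intro h0
  have : Subsingleton V := Module.finrank_zero_iff.mp (by simpa [FDRep.char_one] using h0)
  have hzero : V.character = 0 := funext fun g ↦ by
    simp [FDRep.character, Subsingleton.elim (V.ρ g) 0]
  simp [hzero, charPairing] at hnorm
  exact Fintype.card_ne_zero (by exact_mod_cast hnorm.symm)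

theorem finite_Irr : (Irr G).Finite := by
  have hli : LinearIndependent ℂ (Subtype.val : Irr G → G → ℂ) :=
    .of_pairwise_dual_eq_zero_of_ne_zero _ (fun ψ ↦ charPairing ψ.1)
      (fun ψ χ hne ↦ by simp [charPairing_of_isIrrChar χ.2 ψ.2, Subtype.val_injective.ne hne.symm])
      (fun ψ ↦ by simp [charPairing_of_isIrrChar ψ.2 ψ.2])
  exact hli.setFinite

open scoped Classical in
theorem charPairing_sigmaCF {X : Set (G → ℂ)} (hX : X ⊆ Irr G) {ψ : G → ℂ}
    (hψ : IsIrrChar G ψ) :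
    charPairing ψ (sigmaCF X) = if ψ ∈ X then ψ 1 * Fintype.card G else 0 := by
  have hXfin : X.Finite := finite_Irr.subset hX
  have hsum : sigmaCF X = ∑ χ ∈ hXfin.toFinset, χ 1 • χ := funext fun g ↦ by
    simp [sigmaCF, finsum_mem_eq_finite_toFinset_sum _ hXfin]
  simp only [hsum, map_sum, map_smul, smul_eq_mul]
  rw [Finset.sum_congr rfl fun χ hχ ↦ by
    rw [charPairing_of_isIrrChar (hX (hXfin.mem_toFinset.mp hχ)) hψ, mul_ite, mul_zero]]
  simp

theorem linearIndependent_sigmaCF {𝒳 : Set (Set (G → ℂ))} (hne : ∀ X ∈ 𝒳, X.Nonempty)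
    (hdisj : 𝒳.Pairwise Disjoint) (hIrr : ∀ X ∈ 𝒳, X ⊆ Irr G) :
    LinearIndependent ℂ fun X : 𝒳 ↦ sigmaCF (X : Set (G → ℂ)) := by
  choose ψ hψ using fun X : 𝒳 ↦ hne X X.2
  refine .of_pairwise_dual_eq_zero_of_ne_zero _ (fun X ↦ charPairing (ψ X)) (fun X Y hXY ↦ ?_)
    (fun X ↦ ?_)
  · have hψY : ψ X ∉ (Y : Set (G → ℂ)) :=
      Set.disjoint_left.mp (hdisj X.2 Y.2 (Subtype.val_injective.ne hXY)) (hψ X)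
    simp [charPairing_sigmaCF (hIrr Y Y.2) (hIrr X X.2 (hψ X)), hψY]
  · simp [charPairing_sigmaCF (hIrr X X.2) (hIrr X X.2 (hψ X)), hψ X,
      (hIrr X X.2 (hψ X)).apply_one_ne_zero]

end Characters

namespace IsSCT

variable {G : Type} [Group G] {𝒳 : Set (Set (G → ℂ))} {𝒦 : Set (Set (ConjClasses G))}

theorem subset_Irr (h : IsSCT G 𝒳 𝒦) {X : Set (G → ℂ)} (hX : X ∈ 𝒳) : X ⊆ Irr G :=
  h.unionX ▸ Set.subset_sUnion_of_mem hX

theorem exists_mem (h : IsSCT G 𝒳 𝒦) (K : ConjClasses G) : ∃ S ∈ 𝒦, K ∈ S :=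
  Set.mem_sUnion.mp (h.unionK ▸ Set.mem_univ K)

theorem eq_of_mem (h : IsSCT G 𝒳 𝒦) {S T : Set (ConjClasses G)} (hS : S ∈ 𝒦) (hT : T ∈ 𝒦)
    {K : ConjClasses G} (hKS : K ∈ S) (hKT : K ∈ T) : S = T :=
  Set.PairwiseDisjoint.elim_set h.pairwiseK hS hT K hKS hKT

theorem exists_rep_mem (h : IsSCT G 𝒳 𝒦) {S : Set (ConjClasses G)} (hS : S ∈ 𝒦) :
    ∃ g : G, ConjClasses.mk g ∈ S := by
  obtain ⟨K, hK⟩ := h.nonemptyK S hS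
  obtain ⟨g, rfl⟩ := ConjClasses.exists_rep K
  exact ⟨g, hK⟩

theorem mem_of_forall_sigmaCF_eq [Finite G] (h : IsSCT G 𝒳 𝒦) {x y : G}
    (hxy : ∀ X ∈ 𝒳, sigmaCF X x = sigmaCF X y) {S : Set (ConjClasses G)} (hS : S ∈ 𝒦)
    (hx : ConjClasses.mk x ∈ S) : ConjClasses.mk y ∈ S := by
  have := Fintype.ofFinite G
  have : Fintype 𝒳 := ((finite_Irr (G := G)).finite_subsets.subset fun _ ↦ h.subset_Irr).fintype
  have := Fintype.ofFinite 𝒦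
  choose part hpart using fun g : G ↦ h.exists_mem (ConjClasses.mk g)
  let p (g : G) : 𝒦 := ⟨part g, (hpart g).1⟩
  choose rep hrep using fun T : 𝒦 ↦ h.exists_rep_mem T.2
  let w (X : 𝒳) (T : 𝒦) : ℂ := sigmaCF (X : Set (G → ℂ)) (rep T)
  have hfactor (X : 𝒳) (g : G) : sigmaCF (X : Set (G → ℂ)) g = w X (p g) :=
    h.consistentPairs X X.2 _ (hpart g).1 g _ (hpart g).2 (hrep (p g))
  have hw : LinearIndependent ℂ w := by
    refine .of_comp (LinearMap.funLeft ℂ ℂ p) ?_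
    convert linearIndependent_sigmaCF h.nonemptyX h.pairwiseX fun _ ↦ h.subset_Irr
    exact funext (hfactor _ ·) |>.symm
  have hcard : Fintype.card 𝒳 = Fintype.card 𝒦 := by
    simpa [← Nat.card_eq_fintype_card, Nat.card_coe_set_eq] using h.cardEq
  have hpxy : p x = p y :=
    hw.eq_of_forall_apply_eq hcard fun X ↦ by rw [← hfactor, ← hfactor, hxy X X.2]
  have hSx : S = part x := h.eq_of_mem hS (hpart x).1 hx (hpart x).2
  have hpart_eq : part x = part y := congrArg Subtype.val hpxy
  exact hSx ▸ hpart_eq ▸ (hpart y).2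

theorem eq_image_setOf_sigmaCF_eq [Finite G] (h : IsSCT G 𝒳 𝒦) {S : Set (ConjClasses G)}
    (hS : S ∈ 𝒦) {x : G} (hx : ConjClasses.mk x ∈ S) :
    S = ConjClasses.mk '' {y | ∀ X ∈ 𝒳, sigmaCF X y = sigmaCF X x} := by
  ext K
  obtain ⟨y, rfl⟩ := ConjClasses.exists_rep K
  refine ⟨fun hy ↦ ⟨y, fun X hX ↦ h.consistentPairs X hX S hS y x hy hx, rfl⟩, ?_⟩
  rintro ⟨z, hz, hzy⟩
  exact hzy ▸ h.mem_of_forall_sigmaCF_eq (fun X hX ↦ (hz X hX).symm) hS hx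

end IsSCT

/-- a partition of `Irr(G)` admits at most one partition of `Con(G)` making the
pair a supercharacter theory. -/
theorem stmt_4 {G : Type} [Group G] [Finite G]
    (𝒳 : Set (Set (G → ℂ))) (𝒦 𝒦' : Set (Set (ConjClasses G)))
    (h : IsSCT G 𝒳 𝒦) (h' : IsSCT G 𝒳 𝒦') :
    𝒦 = 𝒦' := by
  suffices ∀ {𝒦₁ 𝒦₂ : Set (Set (ConjClasses G))}, IsSCT G 𝒳 𝒦₁ → IsSCT G 𝒳 𝒦₂ → 𝒦₁ ⊆ 𝒦₂ from
    (this h h').antisymm (this h' h)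
  intro 𝒦₁ 𝒦₂ h₁ h₂ S hS
  obtain ⟨x, hx⟩ := h₁.exists_rep_mem hS
  obtain ⟨S', hS', hxS'⟩ := h₂.exists_mem (ConjClasses.mk x)
  rwa [h₁.eq_image_setOf_sigmaCF_eq hS hx, ← h₂.eq_image_setOf_sigmaCF_eq hS' hxS']
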